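/- arXiv:2409.13685 — 7 statements merged into one kernel-verified Lean document; each statement's English description precedes it below -/
import Mathlib

section
/- Let c : ℕ → ℕ satisfy c 2 = 1, c 3 = 2, and c n = ⌊n/2⌋·⌈n/2⌉ + c ⌈n/2⌉ for n > 3, and let Δ n = c (n+1) - c n. Then for all n ≥ 2, n/2 ≤ Δ n (as rationals, i.e. n ≤ 2·Δ n) and Δ n ≤ n. -/
theorem stmt3 (c : ℕ → ℕ) (hc2 : c 2 = 1) (hc3 : c 3 = 2)
    (hrec : ∀ n, 3 < n → c n = (n / 2) * ((n + 1) / 2) + c ((n + 1) / 2)) :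
    ∀ n, 2 ≤ n → n ≤ 2 * (c (n + 1) - c n) ∧ c (n + 1) - c n ≤ n := by
  have aux : ∀ n, 2 ≤ n → ∃ d, c (n + 1) = c n + d ∧ n ≤ 2 * d ∧ d ≤ n := by
    intro n
    induction n using Nat.strong_induction_on with
    | _ n ih =>
      intro hn
      rcases Nat.lt_or_ge n 4 with h4 | h4
      · interval_cases n
        · exact ⟨1, by norm_num [hc2, hc3], by omega, by omega⟩
        · have h := hrec 4 (by omega)
          norm_num at h
          exact ⟨3, by norm_num [h, hc2, hc3], by omega, by omega⟩
      · rcases Nat.even_or_odd n with ⟨m, hm⟩ | ⟨m, hm⟩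
        · -- n = 2m, m ≥ 2
          have hm2 : 2 ≤ m := by omega
          have h1 := hrec n (by omega)
          have h2 := hrec (n + 1) (by omega)
          have e1 : (n + 1) / 2 = m := by omega
          have e0 : n / 2 = m := by omega
          have e2 : (n + 1 + 1) / 2 = m + 1 := by omega
          rw [e1, e0] at h1
          rw [e1, e2] at h2
          obtain ⟨d, hd, hd1, hd2⟩ := ih m (by omega) hm2
          refine ⟨m + d, ?_, by omega, by omega⟩
          have hr : m * (m + 1) = m * m + m := by ring
          linarith
        · -- n = 2m+1, m ≥ 2
          have hm2 : 2 ≤ m := by omega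
          have h1 := hrec n (by omega)
          have h2 := hrec (n + 1) (by omega)
          have e0 : n / 2 = m := by omega
          have e1 : (n + 1) / 2 = m + 1 := by omega
          have e2 : (n + 1 + 1) / 2 = m + 1 := by omega
          rw [e0, e1] at h1
          rw [e1, e2] at h2
          refine ⟨m + 1, ?_, by omega, by omega⟩
          have hr : (m + 1) * (m + 1) = m * (m + 1) + (m + 1) := by ring
          linarith
  intro n hn
  obtain ⟨d, hd, h1, h2⟩ := aux n hn
  have : c (n + 1) - c n = d := by omega
  omega
end

section
/- Let c : ℕ → ℕ satisfy c 2 = 1, c 3 = 2, and c n = ⌊n/2⌋·⌈n/2⌉ + c ⌈n/2⌉ for n > 3, and let Δ n = c (n+1) - c n. Then for every k ≥ 1, Δ (2^k) = 2^k - 1. -/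
theorem stmt4 (c : ℕ → ℕ) (hc2 : c 2 = 1) (hc3 : c 3 = 2)
    (hrec : ∀ n, 3 < n → c n = (n / 2) * ((n + 1) / 2) + c ((n + 1) / 2)) :
    ∀ k : ℕ, 2 ≤ 2 ^ k → c (2 ^ k + 1) - c (2 ^ k) = 2 ^ k - 1 := by
  have key : ∀ k : ℕ, 1 ≤ k → c (2 ^ k + 1) + 1 = c (2 ^ k) + 2 ^ k := by
    intro k hk
    induction k with
    | zero => omega
    | succ k ih =>
      rcases Nat.lt_or_ge 1 (k + 1) with h | h
      · have hk1 : 1 ≤ k := by omega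
        have ih := ih hk1
        have hm2 : 2 ≤ 2 ^ k := by
          calc 2 = 2 ^ 1 := rfl
          _ ≤ 2 ^ k := Nat.pow_le_pow_right (by norm_num) hk1
        set m := 2 ^ k with hm
        have hpow : 2 ^ (k + 1) = 2 * m := by rw [pow_succ]; ring
        have e1 := hrec (2 * m) (by omega)
        have e2 := hrec (2 * m + 1) (by omega)
        have ha : (2 * m + 1) / 2 = m := by omega
        have hb : (2 * m + 1 + 1) / 2 = m + 1 := by omega
        have hc' : (2 * m) / 2 = m := by omega
        rw [ha, hc'] at e1
        rw [hb, ha] at e2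
        have hmul : m * (m + 1) = m * m + m := by ring
        rw [hmul] at e2
        rw [hpow]
        omega
      · have hk0 : k = 0 := by omega
        subst hk0
        norm_num
        omega
  intro k hk
  have hk1 : 1 ≤ k := by
    by_contra h
    have : k = 0 := by omega
    subst this
    norm_num at hk
  have := key k hk1
  omega
end

section
/- Let c : ℕ → ℕ satisfy c 2 = 1, c 3 = 2, and c n = ⌊n/2⌋·⌈n/2⌉ + c ⌈n/2⌉ for n > 3, and let Δ n = c (n+1) - c n. Then for every k ≥ 0, Δ (3·2^k) = 3·2^k. -/
theorem stmt5 (c : ℕ → ℕ) (hc2 : c 2 = 1) (hc3 : c 3 = 2)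
    (hrec : ∀ n, 3 < n → c n = (n / 2) * ((n + 1) / 2) + c ((n + 1) / 2)) :
    ∀ k : ℕ, c (3 * 2 ^ k + 1) - c (3 * 2 ^ k) = 3 * 2 ^ k := by
  have key : ∀ k : ℕ, c (3 * 2 ^ k + 1) = c (3 * 2 ^ k) + 3 * 2 ^ k := by
    intro k
    induction k with
    | zero =>
      have h4 := hrec 4 (by norm_num)
      norm_num at h4 ⊢
      rw [h4, hc2, hc3]
    | succ k ih =>
      have hp : (2:ℕ) ^ (k + 1) = 2 ^ k * 2 := pow_succ 2 k
      have hpos : (1:ℕ) ≤ 2 ^ k := Nat.one_le_two_pow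
      have h1 := hrec (3 * 2 ^ (k + 1)) (by omega)
      have h2 := hrec (3 * 2 ^ (k + 1) + 1) (by omega)
      have e1 : (3 * 2 ^ (k + 1)) / 2 = 3 * 2 ^ k := by omega
      have e2 : (3 * 2 ^ (k + 1) + 1) / 2 = 3 * 2 ^ k := by omega
      have e3 : (3 * 2 ^ (k + 1) + 1 + 1) / 2 = 3 * 2 ^ k + 1 := by omega
      rw [e1, e2] at h1
      rw [e2, e3] at h2
      rw [h1, h2, ih]
      ring
  intro k
  rw [key k]
  omega
end

section
/- Let c : ℕ → ℕ satisfy c 2 = 1, c 3 = 2, and c n = ⌊n/2⌋·⌈n/2⌉ + c ⌈n/2⌉ for n > 3, and let Δ n = c (n+1) - c n. If n = 2^k · m with m odd and m > 3, then Δ n = n - (m-1)/2. -/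
/-!
At an odd `n = 2t + 1` both `n` and `n + 1` recurse to `c (t + 1)`, so the difference is
`(t + 1)² - t(t + 1) = t + 1 = n - (n - 1)/2`. At an even `n = 2s` the recursion gives
`Δ (2s) = s + Δ s`, so each factor `2` of `n` doubles the main term while the correction
`(m - 1)/2` coming from the odd part `m` is carried along unchanged.
-/

namespace HalvingRecurrence

variable {c : ℕ → ℕ} (hrec : ∀ n, 3 < n → c n = (n / 2) * ((n + 1) / 2) + c ((n + 1) / 2))
include hrec

theorem rec_two_mul {s : ℕ} (hs : 2 ≤ s) : c (2 * s) = s * s + c s := by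
  rw [hrec (2 * s) (by omega)]
  congr 2 <;> omega

theorem rec_two_mul_add_one {s : ℕ} (hs : 2 ≤ s) : c (2 * s + 1) = s * (s + 1) + c (s + 1) := by
  rw [hrec (2 * s + 1) (by omega)]
  congr 2 <;> omega

theorem succ_two_mul_add_one {t : ℕ} (ht : 2 ≤ t) : c (2 * t + 2) = c (2 * t + 1) + (t + 1) := by
  have hodd := rec_two_mul_add_one hrec ht
  have heven := rec_two_mul hrec (s := t + 1) (by omega)
  rw [show 2 * t + 2 = 2 * (t + 1) by ring, heven, hodd]
  ring

theorem succ_two_mul {s d : ℕ} (hs : 2 ≤ s) (h : c (s + 1) = c s + d) :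
    c (2 * s + 1) = c (2 * s) + (s + d) := by
  rw [rec_two_mul_add_one hrec hs, rec_two_mul hrec hs, h]
  ring

theorem succ_two_pow_mul_odd {m : ℕ} (hm : Odd m) (h3 : 3 < m) (k : ℕ) :
    c (2 ^ k * m + 1) = c (2 ^ k * m) + (2 ^ k * m - (m - 1) / 2) := by
  induction k with
  | zero =>
    obtain ⟨t, rfl⟩ := hm
    rw [pow_zero, one_mul, succ_two_mul_add_one hrec (by omega)]
    congr 1
    omega
  | succ k ih =>
    have hm_le : m ≤ 2 ^ k * m := Nat.le_mul_of_pos_left m (Nat.two_pow_pos k)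
    rw [pow_succ', mul_assoc, succ_two_mul hrec (by omega) ih]
    congr 1
    omega

end HalvingRecurrence

theorem stmt6_general (c : ℕ → ℕ)
    (hrec : ∀ n, 3 < n → c n = (n / 2) * ((n + 1) / 2) + c ((n + 1) / 2)) :
    ∀ k m n : ℕ, Odd m → 3 < m → n = 2 ^ k * m →
      c (n + 1) - c n = n - (m - 1) / 2 := by
  rintro k m n hm h3 rfl
  rw [HalvingRecurrence.succ_two_pow_mul_odd hrec hm h3 k, Nat.add_sub_cancel_left]

theorem stmt6 (c : ℕ → ℕ) (hc2 : c 2 = 1) (hc3 : c 3 = 2)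
    (hrec : ∀ n, 3 < n → c n = (n / 2) * ((n + 1) / 2) + c ((n + 1) / 2)) :
    ∀ k m n : ℕ, Odd m → 3 < m → n = 2 ^ k * m →
      c (n + 1) - c n = n - (m - 1) / 2 :=
  stmt6_general c hrec
end

section
/- Let c : ℕ → ℕ satisfy c 2 = 1, c 3 = 2, and c n = ⌊n/2⌋·⌈n/2⌉ + c ⌈n/2⌉ for n > 3, and let Δ n = c (n+1) - c n. Then for n ≥ 2, Δ n = n if and only if n = 3·2^k for some k ≥ 0. -/
theorem stmt7 (c : ℕ → ℕ) (hc2 : c 2 = 1) (hc3 : c 3 = 2)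
    (hrec : ∀ n, 3 < n → c n = (n / 2) * ((n + 1) / 2) + c ((n + 1) / 2)) :
    ∀ n, 2 ≤ n → (c (n + 1) - c n = n ↔ ∃ k : ℕ, n = 3 * 2 ^ k) := by
  have ce : ∀ m, 2 ≤ m → c (2 * m) = m * m + c m := by
    intro m hm
    have h := hrec (2 * m) (by omega)
    have h1 : 2 * m / 2 = m := by omega
    have h2 : (2 * m + 1) / 2 = m := by omega
    rw [h1, h2] at h; exact h
  have co : ∀ m, 2 ≤ m → c (2 * m + 1) = m * (m + 1) + c (m + 1) := by
    intro m hm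
    have h := hrec (2 * m + 1) (by omega)
    have h1 : (2 * m + 1) / 2 = m := by omega
    have h2 : (2 * m + 1 + 1) / 2 = m + 1 := by omega
    rw [h1, h2] at h; exact h
  have mono : ∀ n, 2 ≤ n → c n ≤ c (n + 1) := by
    intro n
    induction n using Nat.strong_induction_on with
    | _ n ih =>
      intro hn
      rcases Nat.even_or_odd n with ⟨m, hm⟩ | ⟨m, hm⟩
      · -- n = 2m
        have hm2 : n = 2 * m := by omega
        rcases Nat.lt_or_ge m 2 with h | h
        · have : n = 2 := by omega
          subst this; rw [hc2, hc3]; omega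
        · have hcm := ih m (by omega) h
          have e1 := ce m h
          have e2 := co m h
          rw [hm2, e2, e1]
          have : m * m ≤ m * (m + 1) := Nat.mul_le_mul_left m (by omega)
          omega
      · -- n = 2m + 1
        have hm2 : n = 2 * m + 1 := by omega
        rcases Nat.lt_or_ge m 2 with h | h
        · have h1 : m = 1 := by omega
          have : n = 3 := by omega
          subst this
          have e := ce 2 (by omega)
          norm_num at e
          rw [show (4:ℕ) = 3 + 1 from rfl] at e
          rw [e, hc2, hc3]; omega
        · have e1 := co m h
          have e2 := ce (m + 1) (by omega)
          have h3 : 2 * (m + 1) = 2 * m + 1 + 1 := by ring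
          rw [h3] at e2
          rw [hm2, e1, e2]
          have : m * (m + 1) ≤ (m + 1) * (m + 1) := Nat.mul_le_mul_right (m + 1) (by omega)
          omega
  intro n
  induction n using Nat.strong_induction_on with
  | _ n ih =>
    intro hn
    rcases Nat.even_or_odd n with ⟨m, hm⟩ | ⟨m, hm⟩
    · -- n even, n = 2m
      have hm2 : n = 2 * m := by omega
      rcases Nat.lt_or_ge m 2 with h | h
      · -- n = 2
        have : n = 2 := by omega
        subst this
        rw [hc2, hc3]
        constructor
        · intro h'; omega
        · rintro ⟨k, hk⟩
          have : 1 ≤ 2 ^ k := Nat.one_le_two_pow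
          omega
      · obtain ⟨d, hd⟩ : ∃ d, c (m + 1) = c m + d :=
          ⟨c (m + 1) - c m, (Nat.add_sub_cancel' (mono m h)).symm⟩
        have key : c (n + 1) - c n = m + d := by
          rw [hm2, ce m h, co m h, hd]
          have : m * (m + 1) = m * m + m := by ring
          rw [this]
          generalize m * m = a
          omega
        rw [key]
        have ihm := ih m (by omega) h
        rw [hd] at ihm
        simp only [Nat.add_sub_cancel_left] at ihm
        constructor
        · intro h'
          have hdm : d = m := by omega
          obtain ⟨k, hk⟩ := ihm.mp hdm
          exact ⟨k + 1, by rw [pow_succ]; omega⟩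
        · rintro ⟨k, hk⟩
          cases k with
          | zero => simp at hk; omega
          | succ k =>
            have hk' : n = 2 * (3 * 2 ^ k) := by rw [hk, pow_succ]; ring
            have hmk : m = 3 * 2 ^ k := by omega
            have := ihm.mpr ⟨k, hmk⟩
            omega
    · -- n odd, n = 2m+1
      have hm2 : n = 2 * m + 1 := by omega
      rcases Nat.lt_or_ge m 2 with h | h
      · -- n = 3
        have : n = 3 := by omega
        subst this
        have e := ce 2 (by omega)
        norm_num at e
        rw [show (4:ℕ) = 3 + 1 from rfl] at e
        rw [e, hc2, hc3]
        constructor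
        · intro; exact ⟨0, by norm_num⟩
        · intro; omega
      · -- n = 2m+1, m ≥ 2
        have e1 := co m h
        have e2 := ce (m + 1) (by omega)
        have h3 : 2 * (m + 1) = 2 * m + 1 + 1 := by ring
        rw [h3] at e2
        have key : c (n + 1) - c n = m + 1 := by
          rw [hm2, e2, e1]
          have : (m + 1) * (m + 1) = m * (m + 1) + (m + 1) := by ring
          rw [this]
          generalize m * (m + 1) = a
          omega
        rw [key]
        constructor
        · intro h'; omega
        · rintro ⟨k, hk⟩
          cases k with
          | zero => simp at hk; omega
          | succ k =>
            have : n = 2 * (3 * 2 ^ k) := by rw [hk, pow_succ]; ring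
            omega
end

section
/- Let c : ℕ → ℕ satisfy c 2 = 1, c 3 = 2, and c n = ⌊n/2⌋·⌈n/2⌉ + c ⌈n/2⌉ for n > 3. Then for all n ≥ 2, n²/3 - 1 ≤ c n ≤ (n² + n)/3 (as rational numbers). -/
theorem stmt8 (c : ℕ → ℕ) (hc2 : c 2 = 1) (hc3 : c 3 = 2)
    (hrec : ∀ n, 3 < n → c n = (n / 2) * ((n + 1) / 2) + c ((n + 1) / 2)) :
    ∀ n : ℕ, 2 ≤ n → (n : ℚ) ^ 2 / 3 - 1 ≤ (c n : ℚ) ∧ (c n : ℚ) ≤ ((n : ℚ) ^ 2 + n) / 3 := by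
  intro n
  induction n using Nat.strong_induction_on with
  | _ n ih =>
    intro hn
    rcases Nat.lt_or_ge n 4 with h4 | h4
    · interval_cases n
      · rw [hc2]; norm_num
      · rw [hc3]; norm_num
    · have hm2 : 2 ≤ (n + 1) / 2 := by omega
      have hmn : (n + 1) / 2 < n := by omega
      obtain ⟨h1, h2⟩ := ih _ hmn hm2
      rw [hrec n (by omega)]
      obtain ⟨k, hk | hk⟩ := Nat.even_or_odd' n
      · have e1 : n / 2 = k := by omega
        have e2 : (n + 1) / 2 = k := by omega
        rw [e2] at h1 h2
        rw [e1, e2]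
        have hcn : (n : ℚ) = 2 * k := by exact_mod_cast hk
        push_cast
        constructor <;> nlinarith [h1, h2]
      · have e1 : n / 2 = k := by omega
        have e2 : (n + 1) / 2 = k + 1 := by omega
        rw [e2] at h1 h2
        rw [e1, e2]
        have hcn : (n : ℚ) = 2 * k + 1 := by exact_mod_cast hk
        push_cast at h1 h2 ⊢
        constructor <;> nlinarith [h1, h2]
end

section
/- Let c : ℕ → ℕ satisfy c 2 = 1, c 3 = 2, and c n = ⌊n/2⌋·⌈n/2⌉ + c ⌈n/2⌉ for n > 3. Then for all n ≥ 2, c n = (n² - n)/2 - ⌊log₂(n-1)⌋ - Σ_{j=2}^{⌊(n-2)/2⌋} j·⌊1 + log₂((n-1)/(2j+1))⌋, where logarithms of rationals x are interpreted so that ⌊log₂ x⌋ is the greatest integer k with 2^k ≤ x. -/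
/-!
Write `N = n - 1` and `T N = ∑_{j=2}^{⌊(N-1)/2⌋} j (1 + ⌊log₂ (N / (2j+1))⌋)`. Halving `N` lowers
every `⌊log₂ (N / (2j+1))⌋` by one, except that the terms with `N < 2 (2j+1)`, where it is
already `0`, disappear; hence `T N = T ⌊N/2⌋ + ∑_{j=2}^{⌊(N-1)/2⌋} j`. Since also
`⌈n/2⌉ - 1 = ⌊N/2⌋` and `⌊log₂ N⌋ = ⌊log₂ ⌊N/2⌋⌋ + 1`, a Gauss sum shows that the closed form
satisfies the recurrence of `c`, and it agrees with `c` at `n = 2, 3`.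
-/

open Finset

namespace CatNumber

def weightedLogSum (N : ℕ) : ℕ :=
  ∑ j ∈ Icc 2 ((N - 1) / 2), j * (1 + Nat.log 2 (N / (2 * j + 1)))

theorem weightedLogSum_eq_sum_add_half (N : ℕ) :
    weightedLogSum N = ∑ j ∈ Icc 2 ((N - 1) / 2), j + weightedLogSum (N / 2) := by
  unfold weightedLogSum
  have hsplit : ∑ j ∈ Icc 2 ((N - 1) / 2), j * (1 + Nat.log 2 (N / (2 * j + 1))) =
      ∑ j ∈ Icc 2 ((N - 1) / 2), j +
        ∑ j ∈ Icc 2 ((N - 1) / 2), j * Nat.log 2 (N / (2 * j + 1)) := by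
    rw [← sum_add_distrib]
    exact sum_congr rfl fun j _ ↦ by ring
  rw [hsplit]
  congr 1
  symm
  apply sum_subset_zero_on_sdiff (Icc_subset_Icc_right (by omega))
  · intro j hj
    simp only [mem_sdiff, mem_Icc] at hj
    have hlt : N / (2 * j + 1) < 2 := Nat.div_lt_of_lt_mul (by omega)
    simp [Nat.log_eq_zero_iff.mpr (Or.inl hlt)]
  · intro j hj
    simp only [mem_Icc] at hj
    have htwo : 2 ≤ N / (2 * j + 1) := (Nat.le_div_iff_mul_le (by omega)).mpr (by omega)
    rw [Nat.log_of_one_lt_of_le one_lt_two htwo, Nat.div_div_eq_div_mul,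
      Nat.div_div_eq_div_mul, Nat.mul_comm 2]
    ring

theorem two_mul_sum_Icc_two_add_two {K : ℕ} (hK : 1 ≤ K) :
    2 * ∑ j ∈ Icc 2 K, j + 2 = K * (K + 1) := by
  induction K, hK using Nat.le_induction with
  | base => rfl
  | succ K hK ih =>
    rw [sum_Icc_succ_top (by omega), mul_add]
    linarith

def closedForm (n : ℕ) : ℤ :=
  ((n : ℤ) ^ 2 - n) / 2 - Nat.log 2 (n - 1) - weightedLogSum (n - 1)

theorem closedForm_rec {n : ℕ} (hn : 4 ≤ n) :
    closedForm n = ((n / 2 * ((n + 1) / 2) : ℕ) : ℤ) + closedForm ((n + 1) / 2) := by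
  have hhalf : (n + 1) / 2 - 1 = (n - 1) / 2 := by omega
  have hlog := Nat.log_of_one_lt_of_le one_lt_two (show 2 ≤ n - 1 by omega)
  have hsum := weightedLogSum_eq_sum_add_half (n - 1)
  have hgauss := two_mul_sum_Icc_two_add_two (show 1 ≤ (n - 1 - 1) / 2 by omega)
  set S := ∑ j ∈ Icc 2 ((n - 1 - 1) / 2), j
  -- `n (n - 1) = m (m - 1) + 2 ⌊n/2⌋ m + K (K + 1)` with `m = ⌈n/2⌉`, `K = ⌊(n-2)/2⌋`
  have hsquares : (n : ℤ) ^ 2 - n =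
      ((((n + 1) / 2 : ℕ) : ℤ) ^ 2 - ((n + 1) / 2 : ℕ)) +
        ((n / 2 * ((n + 1) / 2) + S + 1 : ℕ) : ℤ) * 2 := by
    obtain ⟨q, rfl | rfl⟩ : ∃ q, n = 2 * q + 2 ∨ n = 2 * q + 3 := ⟨(n - 2) / 2, by omega⟩
    · rw [show (2 * q + 2 - 1 - 1) / 2 = q by omega] at hgauss
      rw [show (2 * q + 2 + 1) / 2 = q + 1 by omega, show (2 * q + 2) / 2 = q + 1 by omega]
      push_cast
      linear_combination (-1 : ℤ) * (by exact_mod_cast hgauss : (2 * S + 2 : ℤ) = q * (q + 1))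
    · rw [show (2 * q + 3 - 1 - 1) / 2 = q by omega] at hgauss
      rw [show (2 * q + 3 + 1) / 2 = q + 2 by omega, show (2 * q + 3) / 2 = q + 1 by omega]
      push_cast
      linear_combination (-1 : ℤ) * (by exact_mod_cast hgauss : (2 * S + 2 : ℤ) = q * (q + 1))
  unfold closedForm
  rw [hsquares, Int.add_mul_ediv_right _ _ two_ne_zero, hhalf, hlog, hsum]
  push_cast
  ring

theorem closedForm_eq (n : ℕ) :
    closedForm n = ((n : ℤ) ^ 2 - n) / 2 - (Nat.log 2 (n - 1) : ℤ) -
      ∑ j ∈ Icc 2 ((n - 2) / 2), (j : ℤ) * (1 + (Nat.log 2 ((n - 1) / (2 * j + 1)) : ℤ)) := by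
  rw [closedForm, weightedLogSum, show n - 1 - 1 = n - 2 by omega]
  push_cast
  rfl

end CatNumber

theorem stmt10 (c : ℕ → ℕ) (hc2 : c 2 = 1) (hc3 : c 3 = 2)
    (hrec : ∀ n, 3 < n → c n = (n / 2) * ((n + 1) / 2) + c ((n + 1) / 2)) :
    ∀ n, 2 ≤ n →
      (c n : ℤ) = ((n : ℤ) ^ 2 - n) / 2 - (Nat.log 2 (n - 1) : ℤ) -
        ∑ j ∈ Finset.Icc 2 ((n - 2) / 2),
          (j : ℤ) * (1 + (Nat.log 2 ((n - 1) / (2 * j + 1)) : ℤ)) := by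
  intro n
  induction n using Nat.strong_induction_on with
  | _ n ih =>
    intro hn
    rw [← CatNumber.closedForm_eq]
    obtain rfl | rfl | h4 : n = 2 ∨ n = 3 ∨ 4 ≤ n := by omega
    · rw [hc2]; decide
    · rw [hc3]; decide
    · rw [hrec n h4, CatNumber.closedForm_rec h4, Nat.cast_add, CatNumber.closedForm_eq,
        ih ((n + 1) / 2) (by omega) (by omega)]
end
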